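/- arXiv:1412.4355 — 2 statements merged into one kernel-verified Lean document; each statement's English description precedes it below -/
import Mathlib

section
/- Let h be the logistic function, I(j), J(j) ≥ 0 integers, and Δ_{lj} real numbers. Then the first-order Taylor expansion holds: for the product f₂(t) = ∏_{l ∈ T₁} h(t + Δ_{lj}) · ∏_{l ∈ T₀} (1 - h(t + Δ_{lj})) with |T₁| = I(j) and |T₀| = J(j), we have |f₂(t) - [h(t)^{I(j)}(1-h(t))^{J(j)} + ∑_{l∈T₁} Δ_{lj} h'(t) h(t)^{I(j)-1}(1-h(t))^{J(j)} - ∑_{l∈T₀} Δ_{lj} h'(t) h(t)^{I(j)}(1-h(t))^{J(j)-1}]| ≤ C·∑_{l ∈ T₀∪T₁} Δ_{lj}², uniformly in t, for some constant C depending only on I(j) and J(j), provided all |Δ_{lj}| ≤ 1. -/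
/-!
`logistic` is Mathlib's `Real.sigmoid`, whose derivative `σ (1 - σ)` is `1`-Lipschitz, so each
factor `σ (t + Δ)` or `1 - σ (t + Δ)` differs from its first-order Taylor polynomial at `t` by at
most `Δ ^ 2`. A product of numbers in `[-1, 1]` is expanded to first order around `∏ aᵢ` by
induction on the index set; the cross terms are bounded by `(∑ |Δₗ|) ^ 2 / 2 ≤ (I + J) ∑ Δₗ ^ 2 / 2`.
-/

open Finset Real NNReal

noncomputable def logistic (t : ℝ) : ℝ := 1 / (1 + Real.exp (-t))

lemma logistic_eq_sigmoid : logistic = sigmoid := funext fun t => by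
  rw [logistic, sigmoid_def, one_div]

lemma lipschitzWith_of_hasDerivAt_abs_le {f f' : ℝ → ℝ} {K : ℝ≥0}
    (hf : ∀ x, HasDerivAt f (f' x) x) (bound : ∀ x, |f' x| ≤ K) : LipschitzWith K f :=
  lipschitzOnWith_univ.1 <| convex_univ.lipschitzOnWith_of_nnnorm_hasDerivWithin_le
    (fun x _ => (hf x).hasDerivWithinAt) fun x _ => by
      rw [← NNReal.coe_le_coe, coe_nnnorm, Real.norm_eq_abs]; exact bound x

lemma abs_sub_sub_mul_le_of_lipschitzWith_deriv {f f' : ℝ → ℝ} {K : ℝ≥0}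
    (hf : ∀ x, HasDerivAt f (f' x) x) (hf' : LipschitzWith K f') (x δ : ℝ) :
    |f (x + δ) - f x - δ * f' x| ≤ K * δ ^ 2 := by
  have hφ : ∀ y, HasDerivAt (fun y => f y - y * f' x) (f' y - f' x) y := fun y =>
    (hf y).sub (hasDerivAt_mul_const (f' x))
  have hbound : ∀ y ∈ Set.uIcc x (x + δ), ‖f' y - f' x‖ ≤ K * |δ| := fun y hy => by
    calc ‖f' y - f' x‖ ≤ K * ‖y - x‖ := by simpa [dist_eq_norm] using hf'.dist_le_mul y x
      _ ≤ K * |δ| := by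
        gcongr
        simpa using Set.abs_sub_left_of_mem_uIcc hy
  have hmvt := Convex.norm_image_sub_le_of_norm_hasDerivWithin_le
    (fun y _ => (hφ y).hasDerivWithinAt) hbound (convex_uIcc x (x + δ))
    Set.left_mem_uIcc Set.right_mem_uIcc
  calc |f (x + δ) - f x - δ * f' x|
      = ‖(f (x + δ) - (x + δ) * f' x) - (f x - x * f' x)‖ := by rw [Real.norm_eq_abs]; ring_nf
    _ ≤ K * |δ| * ‖x + δ - x‖ := hmvt
    _ = K * δ ^ 2 := by rw [add_sub_cancel_left, Real.norm_eq_abs, mul_assoc, abs_mul_abs_self, sq]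

lemma lipschitzWith_sigmoid : LipschitzWith 1 sigmoid :=
  lipschitzWith_of_hasDerivAt_abs_le hasDerivAt_sigmoid fun x => by
    have := sigmoid_nonneg x; have := sigmoid_le_one x
    rw [NNReal.coe_one, abs_le]; constructor <;> nlinarith

lemma lipschitzWith_sigmoid_mul_one_sub :
    LipschitzWith 1 fun x => sigmoid x * (1 - sigmoid x) :=
  lipschitzWith_of_hasDerivAt_abs_le
    (fun x => (hasDerivAt_sigmoid x).mul ((hasDerivAt_sigmoid x).const_sub 1))
    fun x => by
      have h₀ := sigmoid_nonneg x
      have h₁ := sub_nonneg.2 (sigmoid_le_one x)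
      rw [NNReal.coe_one, abs_le]
      constructor <;> nlinarith [mul_nonneg (mul_nonneg h₀ h₀) h₁, mul_nonneg (mul_nonneg h₀ h₁) h₁]

lemma abs_sigmoid_le_one (x : ℝ) : |sigmoid x| ≤ 1 :=
  abs_le.2 ⟨by linarith [sigmoid_nonneg x], sigmoid_le_one x⟩

lemma abs_one_sub_sigmoid_le_one (x : ℝ) : |1 - sigmoid x| ≤ 1 := by
  simpa [sigmoid_neg] using abs_sigmoid_le_one (-x)

lemma abs_sigmoid_add_sub_le (t δ : ℝ) : |sigmoid (t + δ) - sigmoid t| ≤ |δ| := by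
  simpa [dist_eq_norm] using lipschitzWith_sigmoid.dist_le_mul (t + δ) t

lemma abs_sigmoid_add_sub_sub_le (t δ : ℝ) :
    |sigmoid (t + δ) - sigmoid t - δ * (sigmoid t * (1 - sigmoid t))| ≤ δ ^ 2 := by
  simpa using abs_sub_sub_mul_le_of_lipschitzWith_deriv hasDerivAt_sigmoid
    lipschitzWith_sigmoid_mul_one_sub t δ

lemma sigmoid_add_factor_bounds (t δ : ℝ) :
    |sigmoid t| ≤ 1 ∧ |sigmoid (t + δ)| ≤ 1 ∧ |sigmoid (t + δ) - sigmoid t| ≤ |δ| ∧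
      |sigmoid (t + δ) - sigmoid t - δ * (sigmoid t * (1 - sigmoid t))| ≤ δ ^ 2 :=
  ⟨abs_sigmoid_le_one t, abs_sigmoid_le_one (t + δ), abs_sigmoid_add_sub_le t δ,
    abs_sigmoid_add_sub_sub_le t δ⟩

lemma one_sub_sigmoid_add_factor_bounds (t δ : ℝ) :
    |1 - sigmoid t| ≤ 1 ∧ |1 - sigmoid (t + δ)| ≤ 1 ∧
      |(1 - sigmoid (t + δ)) - (1 - sigmoid t)| ≤ |δ| ∧
      |(1 - sigmoid (t + δ)) - (1 - sigmoid t) - -(δ * (sigmoid t * (1 - sigmoid t)))| ≤ δ ^ 2 := by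
  refine ⟨abs_one_sub_sigmoid_le_one t, abs_one_sub_sigmoid_le_one (t + δ), ?_, ?_⟩
  · rw [sub_sub_sub_cancel_left, abs_sub_comm]; exact abs_sigmoid_add_sub_le t δ
  · rw [← abs_neg]; convert abs_sigmoid_add_sub_sub_le t δ using 2; ring

section ProductExpansion

variable {ι : Type*} {s : Finset ι} {a b c δ : ι → ℝ}

lemma abs_prod_le_one (ha : ∀ i ∈ s, |a i| ≤ 1) : |∏ i ∈ s, a i| ≤ 1 := by
  rw [abs_prod]; exact prod_le_one (fun i _ => abs_nonneg _) ha

variable [DecidableEq ι]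

lemma abs_prod_sub_prod_le_sum (ha : ∀ i ∈ s, |a i| ≤ 1) (hb : ∀ i ∈ s, |b i| ≤ 1) :
    |∏ i ∈ s, b i - ∏ i ∈ s, a i| ≤ ∑ i ∈ s, |b i - a i| := by
  induction s using Finset.induction_on with
  | empty => simp
  | insert i s hi ih =>
    simp only [forall_mem_insert] at ha hb
    rw [prod_insert hi, prod_insert hi, sum_insert hi]
    calc |b i * ∏ k ∈ s, b k - a i * ∏ k ∈ s, a k|
        = |b i * (∏ k ∈ s, b k - ∏ k ∈ s, a k) + (b i - a i) * ∏ k ∈ s, a k| := by ring_nf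
      _ ≤ 1 * |∏ k ∈ s, b k - ∏ k ∈ s, a k| + |b i - a i| * 1 := by
        grw [abs_add_le, abs_mul, abs_mul, hb.1, abs_prod_le_one ha.2]
      _ ≤ |b i - a i| + ∑ k ∈ s, |b k - a k| := by linarith [ih ha.2 hb.2]

lemma sum_mul_prod_erase_insert {i : ι} (hi : i ∉ s) :
    ∑ l ∈ insert i s, c l * ∏ k ∈ (insert i s).erase l, a k
      = c i * ∏ k ∈ s, a k + a i * ∑ l ∈ s, c l * ∏ k ∈ s.erase l, a k := by
  rw [sum_insert hi, erase_insert hi, mul_sum]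
  congr 1
  refine sum_congr rfl fun l hl => ?_
  rw [erase_insert_of_ne (ne_of_mem_of_not_mem hl hi).symm,
    prod_insert fun h => hi (mem_of_mem_erase h)]
  ring

lemma abs_prod_sub_prod_sub_sum_le (ha : ∀ i ∈ s, |a i| ≤ 1)
    (hb : ∀ i ∈ s, |b i| ≤ 1) (hδ : ∀ i ∈ s, |b i - a i| ≤ δ i)
    (hc : ∀ i ∈ s, |b i - a i - c i| ≤ δ i ^ 2) :
    |∏ i ∈ s, b i - ∏ i ∈ s, a i - ∑ i ∈ s, c i * ∏ k ∈ s.erase i, a k|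
      ≤ ∑ i ∈ s, δ i ^ 2 + (∑ i ∈ s, δ i) ^ 2 / 2 := by
  induction s using Finset.induction_on with
  | empty => simp
  | insert i s hi ih =>
    simp only [forall_mem_insert] at ha hb hδ hc
    rw [prod_insert hi, prod_insert hi, sum_mul_prod_erase_insert hi, sum_insert hi, sum_insert hi]
    set B := ∏ k ∈ s, b k
    set A := ∏ k ∈ s, a k
    set L := ∑ l ∈ s, c l * ∏ k ∈ s.erase l, a k
    have hBA : |B - A| ≤ ∑ k ∈ s, δ k :=
      (abs_prod_sub_prod_le_sum ha.2 hb.2).trans (sum_le_sum hδ.2)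
    have hδi : 0 ≤ δ i := (abs_nonneg _).trans hδ.1
    calc |b i * B - a i * A - (c i * A + a i * L)|
        = |a i * (B - A - L) + (b i - a i - c i) * A + (b i - a i) * (B - A)| := by ring_nf
      _ ≤ 1 * |B - A - L| + δ i ^ 2 * 1 + δ i * ∑ k ∈ s, δ k := by
        grw [abs_add_le, abs_add_le, abs_mul, abs_mul, abs_mul, ha.1, hc.1, abs_prod_le_one ha.2,
          hδ.1, hBA]
      _ ≤ δ i ^ 2 + ∑ k ∈ s, δ k ^ 2 + (δ i + ∑ k ∈ s, δ k) ^ 2 / 2 := by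
        nlinarith [ih ha.2 hb.2 hδ.2 hc.2]

end ProductExpansion

section DisjointUnion

variable {ι : Type*} [DecidableEq ι] {T₀ T₁ : Finset ι}

lemma prod_union_piecewise_const (h : Disjoint T₀ T₁) (x y : ℝ) :
    ∏ i ∈ T₀ ∪ T₁, T₁.piecewise (fun _ => x) (fun _ => y) i = x ^ #T₁ * y ^ #T₀ := by
  rw [prod_piecewise, union_inter_cancel_right, union_sdiff_cancel_right h, prod_const, prod_const]

lemma prod_erase_union_piecewise_const (h : Disjoint T₀ T₁) (x y : ℝ) (l : ι) :
    ∏ i ∈ (T₀ ∪ T₁).erase l, T₁.piecewise (fun _ => x) (fun _ => y) i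
      = x ^ #(T₁.erase l) * y ^ #(T₀.erase l) := by
  rw [prod_piecewise, erase_inter, erase_sdiff_comm, union_inter_cancel_right,
    union_sdiff_cancel_right h, prod_const, prod_const]

lemma sum_piecewise_mul_prod_erase_union (h : Disjoint T₀ T₁) (x y : ℝ) (f g : ι → ℝ) :
    ∑ l ∈ T₀ ∪ T₁, T₁.piecewise f g l *
        ∏ k ∈ (T₀ ∪ T₁).erase l, T₁.piecewise (fun _ => x) (fun _ => y) k
      = (∑ l ∈ T₁, f l) * x ^ (#T₁ - 1) * y ^ #T₀ + (∑ l ∈ T₀, g l) * x ^ #T₁ * y ^ (#T₀ - 1) := by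
  rw [sum_union h, add_comm, sum_mul, sum_mul, sum_mul, sum_mul]
  congr 1 <;> refine sum_congr rfl fun l hl => ?_
  · have hl₀ : l ∉ T₀ := disjoint_right.1 h hl
    rw [prod_erase_union_piecewise_const h, erase_eq_of_notMem hl₀, card_erase_of_mem hl,
      piecewise_eq_of_mem _ _ _ hl, mul_assoc]
  · have hl₁ : l ∉ T₁ := disjoint_left.1 h hl
    rw [prod_erase_union_piecewise_const h, erase_eq_of_notMem hl₁, card_erase_of_mem hl,
      piecewise_eq_of_notMem _ _ _ hl₁, mul_assoc]

lemma abs_prod_sigmoid_sub_first_order_le (h : Disjoint T₀ T₁) (Δ : ι → ℝ) (t : ℝ) :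
    |(∏ l ∈ T₁, sigmoid (t + Δ l)) * (∏ l ∈ T₀, (1 - sigmoid (t + Δ l))) -
        (sigmoid t ^ #T₁ * (1 - sigmoid t) ^ #T₀ +
          (∑ l ∈ T₁, Δ l) * (sigmoid t * (1 - sigmoid t)) *
            sigmoid t ^ (#T₁ - 1) * (1 - sigmoid t) ^ #T₀ -
          (∑ l ∈ T₀, Δ l) * (sigmoid t * (1 - sigmoid t)) *
            sigmoid t ^ #T₁ * (1 - sigmoid t) ^ (#T₀ - 1))|
      ≤ ∑ l ∈ T₀ ∪ T₁, Δ l ^ 2 + (∑ l ∈ T₀ ∪ T₁, |Δ l|) ^ 2 / 2 := by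
  set p := sigmoid t
  set a := T₁.piecewise (fun _ => p) (fun _ => 1 - p)
  set b := T₁.piecewise (fun l => sigmoid (t + Δ l)) (fun l => 1 - sigmoid (t + Δ l))
  set c := T₁.piecewise (fun l => Δ l * (p * (1 - p))) (fun l => -(Δ l * (p * (1 - p))))
  have hfactor : ∀ l, |a l| ≤ 1 ∧ |b l| ≤ 1 ∧ |b l - a l| ≤ |Δ l| ∧
      |b l - a l - c l| ≤ |Δ l| ^ 2 := fun l => by
    by_cases hl : l ∈ T₁
    · simpa only [a, b, c, piecewise_eq_of_mem _ _ _ hl, sq_abs]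
        using sigmoid_add_factor_bounds t (Δ l)
    · simpa only [a, b, c, piecewise_eq_of_notMem _ _ _ hl, sq_abs]
        using one_sub_sigmoid_add_factor_bounds t (Δ l)
  have hb : ∏ l ∈ T₀ ∪ T₁, b l
      = (∏ l ∈ T₁, sigmoid (t + Δ l)) * ∏ l ∈ T₀, (1 - sigmoid (t + Δ l)) := by
    rw [prod_piecewise, union_inter_cancel_right, union_sdiff_cancel_right h]
  have key := abs_prod_sub_prod_sub_sum_le (s := T₀ ∪ T₁) (fun l _ => (hfactor l).1)
    (fun l _ => (hfactor l).2.1) (fun l _ => (hfactor l).2.2.1) (fun l _ => (hfactor l).2.2.2)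
  rw [hb, prod_union_piecewise_const h, sum_piecewise_mul_prod_erase_union h] at key
  simp only [sum_neg_distrib, ← sum_mul, sq_abs] at key
  convert key using 2
  ring

end DisjointUnion

theorem taylor_expansion_f2 (I J : ℕ) :
    ∃ C : ℝ, ∀ (T₀ T₁ : Finset ℕ) (Δ : ℕ → ℝ),
      Disjoint T₀ T₁ → T₁.card = I → T₀.card = J →
      (∀ l ∈ T₀ ∪ T₁, |Δ l| ≤ 1) →
      ∀ t : ℝ,
        |(∏ l ∈ T₁, logistic (t + Δ l)) * (∏ l ∈ T₀, (1 - logistic (t + Δ l))) -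
            (logistic t ^ I * (1 - logistic t) ^ J +
              (∑ l ∈ T₁, Δ l) * (logistic t * (1 - logistic t)) *
                logistic t ^ (I - 1) * (1 - logistic t) ^ J -
              (∑ l ∈ T₀, Δ l) * (logistic t * (1 - logistic t)) *
                logistic t ^ I * (1 - logistic t) ^ (J - 1))| ≤
          C * ∑ l ∈ T₀ ∪ T₁, (Δ l) ^ 2 := by
  refine ⟨1 + (I + J : ℝ) / 2, fun T₀ T₁ Δ hdisj hI hJ _ t => ?_⟩
  have hcauchy : (∑ l ∈ T₀ ∪ T₁, |Δ l|) ^ 2 ≤ (I + J) * ∑ l ∈ T₀ ∪ T₁, Δ l ^ 2 := by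
    have := sq_sum_le_card_mul_sum_sq (s := T₀ ∪ T₁) (f := fun l => |Δ l|)
    simp only [sq_abs, card_union_of_disjoint hdisj, hI, hJ, Nat.cast_add] at this
    linarith
  have key := abs_prod_sigmoid_sub_first_order_le hdisj Δ t
  rw [hI, hJ] at key
  rw [logistic_eq_sigmoid]
  linarith
end

section
/- Let h be the logistic function and S₀, S₁ a partition of {1,…,m} with both nonempty, η ∈ ℝ^m, σ > 0. Define P(η) = ∫_ℝ ∏_{j∈S₁} S(η_j+σu) ∏_{j∈S₀}(1-S(η_j+σu)) φ(u) du where S(t)=𝟙(t>0) and φ is the standard normal density. Then P(η) = max{0, Φ(min_{j∈S₁}(η_j/σ)) - Φ(max_{j∈S₀}(η_j/σ))}, where Φ is the standard normal CDF. -/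
open MeasureTheory

noncomputable def step (t : ℝ) : ℝ := if 0 < t then 1 else 0
noncomputable def stdNormalPDF (u : ℝ) : ℝ :=
  (Real.sqrt (2 * Real.pi))⁻¹ * Real.exp (-u ^ 2 / 2)
noncomputable def stdNormalCDF (x : ℝ) : ℝ :=
  ∫ u in Set.Iic x, stdNormalPDF u

lemma stdNormalPDF_eq : stdNormalPDF = ProbabilityTheory.gaussianPDFReal 0 1 := by
  ext x
  simp [stdNormalPDF, ProbabilityTheory.gaussianPDFReal, neg_div]

lemma pdf_integrable : Integrable stdNormalPDF := by
  rw [stdNormalPDF_eq]; exact ProbabilityTheory.integrable_gaussianPDFReal 0 1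

lemma pdf_nonneg (x : ℝ) : 0 ≤ stdNormalPDF x := by
  rw [stdNormalPDF_eq]; exact ProbabilityTheory.gaussianPDFReal_nonneg 0 1 x

lemma pdf_total : ∫ u, stdNormalPDF u = 1 := by
  rw [stdNormalPDF_eq]; exact ProbabilityTheory.integral_gaussianPDFReal_eq_one 0 one_ne_zero

lemma pdf_even (x : ℝ) : stdNormalPDF (-x) = stdNormalPDF x := by
  simp [stdNormalPDF]

lemma cdf_neg (x : ℝ) : stdNormalCDF (-x) = 1 - stdNormalCDF x := by
  have h1 : stdNormalCDF (-x) = ∫ u in Set.Ioi x, stdNormalPDF u := by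
    unfold stdNormalCDF
    rw [show (∫ u in Set.Iic (-x), stdNormalPDF u) = ∫ u in Set.Iic (-x), stdNormalPDF (-u) by
      simp [pdf_even]]
    rw [integral_comp_neg_Iic, neg_neg]
  have h2 := intervalIntegral.integral_Iic_add_Ioi (b := x) (pdf_integrable.integrableOn)
    (pdf_integrable.integrableOn)
  rw [pdf_total] at h2
  rw [h1]
  unfold stdNormalCDF
  linarith [h2]

lemma cdf_mono {a b : ℝ} (h : a ≤ b) : stdNormalCDF a ≤ stdNormalCDF b := by
  unfold stdNormalCDF
  apply setIntegral_mono_set pdf_integrable.integrableOn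
    (Filter.Eventually.of_forall pdf_nonneg)
    (HasSubset.Subset.eventuallyLE (Set.Iic_subset_Iic.2 h))

theorem step_likelihood_value (m : ℕ) (S₁ : Finset (Fin m))
    (h₁ : S₁.Nonempty) (h₀ : S₁ᶜ.Nonempty) (η : Fin m → ℝ) (σ : ℝ) (hσ : 0 < σ) :
    (∫ u : ℝ, (∏ j ∈ S₁, step (η j + σ * u)) *
        (∏ j ∈ S₁ᶜ, (1 - step (η j + σ * u))) * stdNormalPDF u) =
      max 0 (stdNormalCDF (S₁.inf' h₁ (fun j => η j / σ)) -
        stdNormalCDF (S₁ᶜ.sup' h₀ (fun j => η j / σ))) := by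
  set a := S₁.inf' h₁ (fun j => η j / σ) with ha
  set b := S₁ᶜ.sup' h₀ (fun j => η j / σ) with hb
  have key : ∀ u : ℝ, (∏ j ∈ S₁, step (η j + σ * u)) *
      (∏ j ∈ S₁ᶜ, (1 - step (η j + σ * u))) * stdNormalPDF u =
      (Set.Ioc (-a) (-b)).indicator stdNormalPDF u := by
    intro u
    have e1 : (∏ j ∈ S₁, step (η j + σ * u)) = if -a < u then 1 else 0 := by
      simp only [step]
      rw [Finset.prod_boole]
      congr 1
      rw [eq_iff_iff]
      constructor
      · intro h
        rw [neg_lt, ha, Finset.lt_inf'_iff]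
        intro j hj
        have := h j hj
        rw [lt_div_iff₀ hσ]
        nlinarith
      · intro h j hj
        rw [neg_lt, ha, Finset.lt_inf'_iff] at h
        have := h j hj
        rw [lt_div_iff₀ hσ] at this
        nlinarith
    have e2 : (∏ j ∈ S₁ᶜ, (1 - step (η j + σ * u))) = if u ≤ -b then 1 else 0 := by
      have : ∀ j ∈ S₁ᶜ, (1 : ℝ) - step (η j + σ * u) = if η j + σ * u ≤ 0 then 1 else 0 := by
        intro j _
        simp only [step]
        by_cases h : 0 < η j + σ * u
        · simp [h, not_le.2 h]
        · simp [h, not_lt.1 h]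
      rw [Finset.prod_congr rfl this, Finset.prod_boole]
      congr 1
      rw [eq_iff_iff]
      constructor
      · intro h
        rw [le_neg, hb, Finset.sup'_le_iff]
        intro j hj
        have := h j hj
        rw [div_le_iff₀ hσ]
        nlinarith
      · intro h j hj
        rw [le_neg, hb, Finset.sup'_le_iff] at h
        have := h j hj
        rw [div_le_iff₀ hσ] at this
        nlinarith
    rw [e1, e2]
    by_cases hu1 : -a < u <;> by_cases hu2 : u ≤ -b <;>
      simp [Set.indicator, Set.mem_Ioc, hu1, hu2]
  rw [integral_congr_ae (Filter.Eventually.of_forall key)]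
  rw [integral_indicator measurableSet_Ioc]
  by_cases hab : b < a
  · have hmax : max 0 (stdNormalCDF a - stdNormalCDF b) = stdNormalCDF a - stdNormalCDF b :=
      max_eq_right (by linarith [cdf_mono hab.le])
    rw [hmax]
    have : (∫ u in Set.Ioc (-a) (-b), stdNormalPDF u) =
        stdNormalCDF (-b) - stdNormalCDF (-a) := by
      unfold stdNormalCDF
      rw [intervalIntegral.integral_Iic_sub_Iic pdf_integrable.integrableOn
        pdf_integrable.integrableOn, intervalIntegral.integral_of_le (by linarith)]
    rw [this, cdf_neg, cdf_neg]
    ring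
  · push_neg at hab
    have hmax : max 0 (stdNormalCDF a - stdNormalCDF b) = 0 :=
      max_eq_left (by linarith [cdf_mono hab])
    rw [hmax]
    rw [Set.Ioc_eq_empty (by simp; linarith)]
    simp
end
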